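/- Fix α ∈ (0,1) and an integer d ≥ 1. For each sufficiently large v > 0, the map u ↦ Ψ(u − d/v)/Ψ(v − d/v) is continuous and strictly decreasing on [v, ∞), taking value 1 at u = v and tending to 0, hence there is a unique u_TG(α, v) ≥ v with Ψ(u_TG(α,v) − d/v)/Ψ(v − d/v) = α. Moreover, there exists v₀ < ∞, depending only on α and d, such that for all v ≥ v₀, u_TG(α, v) ≤ v + 2·log(1/α)/v. -/

import Mathlib

open MeasureTheory

/-- The standard normal density `φ(z) = (2π)^{-1/2} exp(−z²/2)`. -/
noncomputable def phi (x : ℝ) : ℝ := (Real.sqrt (2 * Real.pi))⁻¹ * Real.exp (-x ^ 2 / 2)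

/-- The standard Gaussian survival function `Ψ(x) = ∫_x^∞ φ(z) dz`. -/
noncomputable def Psi (x : ℝ) : ℝ := ∫ z in Set.Ioi x, phi z

/-!
The ratio is `Ψ(u - c)/Ψ(v - c)` with `c = d/v`, and `Ψ` is positive, continuous, strictly
decreasing and vanishes at infinity, which gives everything but the bound. For the bound, the
identity `φ(z + t) = e^{-zt - t²/2} φ(z)` yields `Ψ(a + t) ≤ e^{-at} Ψ(a)` for `t ≥ 0`; taking
`a = v - c` and `t = u - v` gives `(v - c)(u - v) ≤ log(1/α)`, and `c ≤ v/2` once `v ≥ d + 1`.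
-/

open Set Filter Topology

lemma phi_eq_gaussianPDFReal : phi = ProbabilityTheory.gaussianPDFReal 0 1 := by
  ext x
  simp [phi, ProbabilityTheory.gaussianPDFReal]

lemma phi_pos (x : ℝ) : 0 < phi x := by
  rw [phi_eq_gaussianPDFReal]
  exact ProbabilityTheory.gaussianPDFReal_pos _ _ _ one_ne_zero

lemma integrable_phi : Integrable phi := by
  rw [phi_eq_gaussianPDFReal]
  exact ProbabilityTheory.integrable_gaussianPDFReal _ _

lemma phi_add (z t : ℝ) : phi (z + t) = Real.exp (-(z * t) - t ^ 2 / 2) * phi z := by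
  simp only [phi]
  rw [mul_left_comm, ← Real.exp_add]
  ring_nf

lemma Psi_sub_Psi (x y : ℝ) : Psi x - Psi y = ∫ z in x..y, phi z :=
  intervalIntegral.integral_Ioi_sub_Ioi' integrable_phi.integrableOn integrable_phi.integrableOn

lemma Psi_nonneg (x : ℝ) : 0 ≤ Psi x :=
  setIntegral_nonneg measurableSet_Ioi fun z _ => (phi_pos z).le

lemma continuous_Psi : Continuous Psi := by
  have h : Psi = fun y => Psi 0 - ∫ z in (0 : ℝ)..y, phi z := by
    ext y; rw [← Psi_sub_Psi]; ring
  rw [h]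
  exact continuous_const.sub (integrable_phi.continuous_primitive 0)

lemma strictAnti_Psi : StrictAnti Psi := fun x y hxy => by
  have := intervalIntegral.intervalIntegral_pos_of_pos integrable_phi.intervalIntegrable
    phi_pos hxy
  linarith [Psi_sub_Psi x y]

lemma Psi_pos (x : ℝ) : 0 < Psi x :=
  (Psi_nonneg (x + 1)).trans_lt (strictAnti_Psi (lt_add_one x))

lemma tendsto_Psi_atTop : Tendsto Psi atTop (𝓝 0) :=
  tendsto_integral_Ioi_zero tendsto_id

lemma Psi_add_eq_integral (a t : ℝ) : Psi (a + t) = ∫ z in Ioi a, phi (z + t) := by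
  have h := (measurePreserving_add_right (volume : Measure ℝ) t).setIntegral_preimage_emb
    (measurableEmbedding_addRight t) phi (Ioi (a + t))
  rwa [preimage_add_const_Ioi, add_sub_cancel_right, eq_comm] at h

lemma Psi_add_le (a t : ℝ) (ht : 0 ≤ t) :
    Psi (a + t) ≤ Real.exp (-(a * t)) * Psi a := by
  rw [Psi_add_eq_integral, Psi, ← integral_const_mul]
  refine setIntegral_mono_on (integrable_phi.comp_add_right t).integrableOn
    (integrable_phi.const_mul _).integrableOn measurableSet_Ioi fun z hz => ?_
  rw [phi_add]
  have := phi_pos z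
  gcongr
  nlinarith [mem_Ioi.1 hz]

lemma mul_le_log_one_div_of_Psi_add_eq {a t α : ℝ} (ht : 0 ≤ t) (hα : 0 < α)
    (h : Psi (a + t) = α * Psi a) : a * t ≤ Real.log (1 / α) := by
  have hα_le : α ≤ Real.exp (-(a * t)) :=
    le_of_mul_le_mul_right (h ▸ Psi_add_le a t ht) (Psi_pos a)
  have := Real.log_le_log hα hα_le
  rw [Real.log_exp] at this
  rw [one_div, Real.log_inv]
  linarith

lemma existsUnique_eq_of_strictAntiOn_Ici {β γ : Type*} [ConditionallyCompleteLinearOrder β]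
    [TopologicalSpace β] [OrderTopology β] [DenselyOrdered β] [LinearOrder γ]
    [TopologicalSpace γ] [OrderTopology γ] {f : β → γ} {a : β} {l y : γ}
    (hcont : ContinuousOn f (Ici a)) (hanti : StrictAntiOn f (Ici a))
    (hlim : Tendsto f atTop (𝓝 l)) (hly : l < y) (hya : y ≤ f a) :
    ∃! x, a ≤ x ∧ f x = y := by
  obtain ⟨b, hby, hab⟩ :=
    ((hlim.eventually (gt_mem_nhds hly)).and (eventually_ge_atTop a)).exists
  obtain ⟨x, hx, hfx⟩ := intermediate_value_Icc' hab (hcont.mono Icc_subset_Ici_self)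
    ⟨hby.le, hya⟩
  exact ⟨x, ⟨hx.1, hfx⟩, fun x' hx' => hanti.injOn hx'.1 hx.1 (hx'.2.trans hfx.symm)⟩

theorem stmt19_general (d : ℕ) (α : ℝ) (hα0 : 0 < α) (hα1 : α < 1) :
    ∃ v₀ : ℝ, 0 < v₀ ∧ ∀ v : ℝ, v₀ ≤ v →
      ContinuousOn (fun u : ℝ => Psi (u - d / v) / Psi (v - d / v)) (Set.Ici v) ∧
      StrictAntiOn (fun u : ℝ => Psi (u - d / v) / Psi (v - d / v)) (Set.Ici v) ∧
      Psi (v - d / v) / Psi (v - d / v) = 1 ∧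
      Filter.Tendsto (fun u : ℝ => Psi (u - d / v) / Psi (v - d / v)) Filter.atTop (nhds 0) ∧
      (∃! u : ℝ, v ≤ u ∧ Psi (u - d / v) / Psi (v - d / v) = α) ∧
      (∀ u : ℝ, v ≤ u → Psi (u - d / v) / Psi (v - d / v) = α →
        u ≤ v + 2 * Real.log (1 / α) / v) := by
  refine ⟨d + 1, by positivity, fun v hv => ?_⟩
  have hv0 : 0 < v := by linarith [d.cast_nonneg (α := ℝ)]
  set c : ℝ := d / v
  have hc : c ≤ v / 2 := by
    rw [div_le_div_iff₀ hv0 two_pos]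
    nlinarith
  have hD := Psi_pos (v - c)
  have cont : ContinuousOn (fun u => Psi (u - c) / Psi (v - c)) (Ici v) :=
    ((continuous_Psi.comp (continuous_sub_right c)).div_const _).continuousOn
  have anti : StrictAntiOn (fun u => Psi (u - c) / Psi (v - c)) (Ici v) := fun x _ y _ hxy =>
    div_lt_div_of_pos_right (strictAnti_Psi (sub_lt_sub_right hxy c)) hD
  have one : Psi (v - c) / Psi (v - c) = 1 := div_self hD.ne'
  have lim : Tendsto (fun u => Psi (u - c) / Psi (v - c)) atTop (𝓝 0) := by
    simpa [sub_eq_add_neg] using (tendsto_Psi_atTop.comp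
      (tendsto_atTop_add_const_right _ (-c) tendsto_id)).div_const (Psi (v - c))
  refine ⟨cont, anti, one, lim,
    existsUnique_eq_of_strictAntiOn_Ici cont anti lim hα0 (one ▸ hα1.le), fun u hu hfu => ?_⟩
  have hPsi : Psi ((v - c) + (u - v)) = α * Psi (v - c) := by
    rw [sub_add_sub_cancel', ← hfu, div_mul_cancel₀ _ hD.ne']
  have key := mul_le_log_one_div_of_Psi_add_eq (by linarith) hα0 hPsi
  have : u - v ≤ 2 * Real.log (1 / α) / v := by
    rw [le_div_iff₀ hv0]
    nlinarith
  linarith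

/-- for all sufficiently large `v > 0` the map
`u ↦ Ψ(u − d/v)/Ψ(v − d/v)` is continuous and strictly decreasing on `[v, ∞)`, equals `1`
at `u = v`, and tends to `0`; hence there is a unique `u_TG(α,v) ≥ v` at which it equals
`α`; moreover `u_TG(α,v) ≤ v + 2 log(1/α)/v`. -/
theorem stmt19 (d : ℕ) (hd : 1 ≤ d) (α : ℝ) (hα0 : 0 < α) (hα1 : α < 1) :
    ∃ v₀ : ℝ, 0 < v₀ ∧ ∀ v : ℝ, v₀ ≤ v →
      ContinuousOn (fun u : ℝ => Psi (u - d / v) / Psi (v - d / v)) (Set.Ici v) ∧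
      StrictAntiOn (fun u : ℝ => Psi (u - d / v) / Psi (v - d / v)) (Set.Ici v) ∧
      Psi (v - d / v) / Psi (v - d / v) = 1 ∧
      Filter.Tendsto (fun u : ℝ => Psi (u - d / v) / Psi (v - d / v)) Filter.atTop (nhds 0) ∧
      (∃! u : ℝ, v ≤ u ∧ Psi (u - d / v) / Psi (v - d / v) = α) ∧
      (∀ u : ℝ, v ≤ u → Psi (u - d / v) / Psi (v - d / v) = α →
        u ≤ v + 2 * Real.log (1 / α) / v) :=
  stmt19_general d α hα0 hα1
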